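/- Let A = ℤ^m and SAT(A,1) the set of satisfiable one-variable equations over A. Then |ρ_r(SAT(A,1)) − Z_r(m)/r| = O(Z_r(m−1)/r²), where Z_n(m) = Σ_{γ=1}^n 1/γ^m. -/

import Mathlib

/-!
Sorting the equations of the ball by `γ`: for `γ ≠ 0` each coordinate of `α` ranges over the
`2⌊r/|γ|⌋ + 1` multiples of `γ` in `[-r, r]`, so `(2r+1)^(m+1) ρ_r = 1 + 2 Σ_{γ=1}^r (2⌊r/γ⌋+1)^m`.
Since `|(2⌊r/γ⌋+1) - 2r/γ| ≤ 1` and both are at most `3r/γ`, replacing one by the other changes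
the `γ`-th term by at most `m (3r/γ)^(m-1)`, hence the sum by `O(r^(m-1) Z_r(m-1))`, and turns it
into `2 (2r)^m Z_r(m) = (2r)^(m+1) Z_r(m)/r`. Trading `(2r)^(m+1)` for `(2r+1)^(m+1)` costs
`O(r^m) Z_r(m)/r` more, and dividing by `(2r+1)^(m+1) ≥ r^(m+1)` gives the bound.
-/

open Filter

/-- A one-variable equation `x^γ a^α = 1` over `ℤ^m` is satisfiable iff
`γ ≠ 0` and `γ ∣ gcd(α)`, or `γ = 0` and `α = 0`. -/
def SatOne (m : ℕ) (e : ℤ × (Fin m → ℤ)) : Prop :=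
  (e.1 ≠ 0 ∧ e.1 ∣ Finset.univ.gcd e.2) ∨ (e.1 = 0 ∧ ∀ j, e.2 j = 0)

/-- Ball density at radius `r` of a set of one-variable equations over `ℤ^m`. -/
noncomputable def rhoOne (m : ℕ) (S : Set (ℤ × (Fin m → ℤ))) (r : ℕ) : ℝ :=
  (Nat.card {e : ℤ × (Fin m → ℤ) //
      (|e.1| ≤ (r : ℤ) ∧ ∀ i, |e.2 i| ≤ (r : ℤ)) ∧ e ∈ S} : ℝ) /
    (2 * r + 1) ^ (m + 1)

/-- Partial zeta sum `Z_n(m) = Σ_{γ=1}^n γ^{-m}`. -/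
noncomputable def Zsum (n m : ℕ) : ℝ := ∑ γ ∈ Finset.Icc 1 n, 1 / (γ : ℝ) ^ m

open Finset

lemma satOne_iff_forall_dvd {m : ℕ} {e : ℤ × (Fin m → ℤ)} : SatOne m e ↔ ∀ i, e.1 ∣ e.2 i := by
  rcases eq_or_ne e.1 0 with h | h
  · simp [SatOne, h, eq_comm]
  · simp [SatOne, h, Finset.dvd_gcd_iff]

lemma Finset.sum_Icc_neg_natAbs {M : Type*} [AddCommMonoid M] (f : ℕ → M) (N : ℕ) :
    ∑ x ∈ Icc (-N : ℤ) N, f x.natAbs = f 0 + 2 • ∑ k ∈ Icc 1 N, f k := by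
  induction N with
  | zero => simp
  | succ N ih =>
    rw [Nat.cast_succ, Icc_succ_succ, sum_union (by simp), sum_pair (by lia), ih,
      sum_Icc_succ_top (by lia), Int.natAbs_neg, ← Nat.cast_succ, Int.natAbs_natCast, smul_add, two_nsmul (f _), add_assoc]

-- For `γ = 0` both sides are `1`, as `r / 0 = 0`.
lemma card_filter_dvd_Icc_neg (γ : ℤ) (r : ℕ) :
    #{x ∈ Icc (-r : ℤ) r | γ ∣ x} = 2 * (r / γ.natAbs) + 1 := by
  simp_rw [card_filter, ← Int.natAbs_dvd_natAbs]
  rw [sum_Icc_neg_natAbs (fun k => if γ.natAbs ∣ k then 1 else 0), ← card_filter,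
    show Icc 1 r = Ioc 0 r from Icc_add_one_left_eq_Ioc 0 r, Nat.Ioc_filter_dvd_card_eq_div]
  simp [add_comm, two_mul]

lemma card_ball_satOne (m r : ℕ) :
    Nat.card {e : ℤ × (Fin m → ℤ) // (|e.1| ≤ (r : ℤ) ∧ ∀ i, |e.2 i| ≤ (r : ℤ)) ∧ SatOne m e} =
      ∑ γ ∈ Icc (-r : ℤ) r, (2 * (r / γ.natAbs) + 1) ^ m := by
  rw [Nat.subtype_card ((Icc (-r : ℤ) r).biUnion fun γ =>
      {γ} ×ˢ Fintype.piFinset fun _ => {x ∈ Icc (-r : ℤ) r | γ ∣ x}), card_biUnion]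
  · simp [card_filter_dvd_Icc_neg]
  · intro a _ b _ hab
    simp only [disjoint_left, mem_product, mem_singleton]
    rintro e ⟨rfl, -⟩ ⟨rfl, -⟩
    exact hab rfl
  · rintro ⟨γ, v⟩
    simp [satOne_iff_forall_dvd, abs_le, forall_and, and_assoc]

lemma rhoOne_satOne_eq (m r : ℕ) :
    rhoOne m (SatOne m) r =
      (1 + 2 * ∑ k ∈ Icc 1 r, ((2 * (r / k) + 1 : ℕ) : ℝ) ^ m) / (2 * r + 1) ^ (m + 1) := by
  unfold rhoOne
  -- `rhoOne` takes `SatOne m` as a set only up to defeq, which `rw` cannot see through.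
  change (Nat.card {e : ℤ × (Fin m → ℤ) // _ ∧ SatOne m e} : ℝ) / _ = _
  rw [card_ball_satOne, sum_Icc_neg_natAbs (fun k => (2 * (r / k) + 1) ^ m)]
  push_cast
  simp

lemma abs_pow_sub_pow_le_of_abs_sub_le_one {α : Type*} [CommRing α] [LinearOrder α]
    [IsStrictOrderedRing α] {a b M : α} (n : ℕ) (hab : |a - b| ≤ 1) (ha : |a| ≤ M)
    (hb : |b| ≤ M) : |a ^ n - b ^ n| ≤ n * M ^ (n - 1) := by
  calc |a ^ n - b ^ n| ≤ |a - b| * n * max |a| |b| ^ (n - 1) := abs_pow_sub_pow_le a b n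
    _ ≤ 1 * n * M ^ (n - 1) := by gcongr; exact max_le ha hb
    _ = n * M ^ (n - 1) := by rw [one_mul]

lemma abs_two_floor_add_one_pow_sub_le {x : ℝ} (hx : 1 ≤ x) (n : ℕ) :
    |(2 * ⌊x⌋₊ + 1 : ℝ) ^ n - (2 * x) ^ n| ≤ n * (3 * x) ^ (n - 1) := by
  have hfloor := Nat.floor_le (zero_le_one.trans hx)
  have hlt := Nat.lt_floor_add_one x
  apply abs_pow_sub_pow_le_of_abs_sub_le_one
  · rw [abs_le]; constructor <;> linarith
  · rw [abs_of_nonneg (by positivity)]; linarith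
  · rw [abs_of_nonneg (by positivity)]; linarith

lemma Zsum_nonneg (n m : ℕ) : 0 ≤ Zsum n m := by
  unfold Zsum; positivity

lemma one_le_Zsum {n : ℕ} (hn : 1 ≤ n) (m : ℕ) : 1 ≤ Zsum n m := by
  simpa [Zsum] using single_le_sum (f := fun k : ℕ => 1 / (k : ℝ) ^ m) (fun k _ => by positivity)
    (mem_Icc.2 ⟨le_rfl, hn⟩)

lemma Zsum_antitone (n : ℕ) : Antitone (Zsum n) := by
  intro m m' hmm'
  refine sum_le_sum fun k hk => ?_
  have hk1 : (1 : ℝ) ≤ k := by exact_mod_cast (mem_Icc.1 hk).1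
  gcongr

lemma abs_sum_floor_pow_sub_le (m r : ℕ) :
    |∑ k ∈ Icc 1 r, ((2 * (r / k) + 1 : ℕ) : ℝ) ^ m - (2 * r) ^ m * Zsum r m| ≤
      m * (3 * r) ^ (m - 1) * Zsum r (m - 1) := by
  rw [Zsum, Zsum, mul_sum, mul_sum, ← sum_sub_distrib]
  refine (abs_sum_le_sum_abs _ _).trans (sum_le_sum fun k hk => ?_)
  obtain ⟨hk1, hkr⟩ := mem_Icc.1 hk
  have hk0 : (0 : ℝ) < k := by exact_mod_cast hk1
  have hx : 1 ≤ (r : ℝ) / k := by rw [le_div_iff₀ hk0]; exact_mod_cast by lia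
  have key := abs_two_floor_add_one_pow_sub_le hx m
  rw [Nat.floor_div_eq_div] at key
  calc |((2 * (r / k) + 1 : ℕ) : ℝ) ^ m - (2 * r) ^ m * (1 / (k : ℝ) ^ m)|
      = |(2 * ((r / k : ℕ) : ℝ) + 1) ^ m - (2 * (r / k)) ^ m| := by
        push_cast; rw [mul_one_div, ← div_pow, mul_div_assoc]
    _ ≤ m * (3 * (r / k)) ^ (m - 1) := key
    _ = m * (3 * r) ^ (m - 1) * (1 / (k : ℝ) ^ (m - 1)) := by
        rw [mul_one_div, mul_div_assoc, ← div_pow, mul_div_assoc]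

lemma abs_card_ball_satOne_sub_le {m r : ℕ} (hm : 1 ≤ m) (hr : 1 ≤ r) :
    |(1 + 2 * ∑ k ∈ Icc 1 r, ((2 * (r / k) + 1 : ℕ) : ℝ) ^ m) -
        (2 * r + 1) ^ (m + 1) * (Zsum r m / r)| ≤
      (5 * m + 4) * ((3 * r) ^ (m - 1) * Zsum r (m - 1)) := by
  have hSZ := abs_le.1 (abs_sum_floor_pow_sub_le m r)
  set S := ∑ k ∈ Icc 1 r, ((2 * (r / k) + 1 : ℕ) : ℝ) ^ m
  set x : ℝ := (r : ℝ)
  set T := (3 * x) ^ (m - 1) * Zsum r (m - 1)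
  have hx : 1 ≤ x := Nat.one_le_cast.2 hr
  have hT : 1 ≤ T := one_le_mul_of_one_le_of_one_le (one_le_pow₀ (by linarith)) (one_le_Zsum hr _)
  have hZ : 0 ≤ Zsum r m / x := div_nonneg (Zsum_nonneg r m) (by linarith)
  have hD : |(2 * x + 1) ^ (m + 1) - (2 * x) ^ (m + 1)| ≤ (m + 1) * (3 * x) ^ m := by
    simpa using abs_pow_sub_pow_le_of_abs_sub_le_one (m + 1) (a := 2 * x + 1) (b := 2 * x)
      (M := 3 * x) (by norm_num) (by rw [abs_of_nonneg (by positivity)]; linarith)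
      (by rw [abs_of_nonneg (by positivity)]; linarith)
  have hDZ : |((2 * x + 1) ^ (m + 1) - (2 * x) ^ (m + 1)) * (Zsum r m / x)| ≤ 3 * (m + 1) * T := by
    rw [abs_mul, abs_of_nonneg hZ]
    calc _ ≤ (m + 1) * (3 * x) ^ m * (Zsum r m / x) := by gcongr
      _ = 3 * (m + 1) * ((3 * x) ^ (m - 1) * Zsum r m) := by
        rw [← mul_pow_sub_one (by lia) (3 * x)]; field_simp
      _ ≤ 3 * (m + 1) * T := by
        gcongr
        exact mul_le_mul_of_nonneg_left (Zsum_antitone r (Nat.sub_le m 1)) (by positivity)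
  have hsplit : (1 + 2 * S) - (2 * x + 1) ^ (m + 1) * (Zsum r m / x) =
      1 + 2 * (S - (2 * x) ^ m * Zsum r m) -
        ((2 * x + 1) ^ (m + 1) - (2 * x) ^ (m + 1)) * (Zsum r m / x) := by
    field_simp; ring
  rw [hsplit, abs_le]
  constructor <;> linarith [abs_le.1 hDZ]

lemma abs_rhoOne_satOne_sub_le {m r : ℕ} (hm : 1 ≤ m) (hr : 1 ≤ r) :
    |rhoOne m (SatOne m) r - Zsum r m / r| ≤
      (5 * m + 4) * 3 ^ (m - 1) * (Zsum r (m - 1) / (r : ℝ) ^ 2) := by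
  have hx : (1 : ℝ) ≤ r := Nat.one_le_cast.2 hr
  have hD : (0 : ℝ) < (2 * r + 1) ^ (m + 1) := by positivity
  have hZ := Zsum_nonneg r (m - 1)
  have hpow : (3 * (r : ℝ)) ^ (m - 1) * r ^ 2 ≤ 3 ^ (m - 1) * (2 * r + 1) ^ (m + 1) := by
    rw [mul_pow, mul_assoc, ← pow_add, show m - 1 + 2 = m + 1 by lia]
    gcongr
    linarith
  rw [rhoOne_satOne_eq, ← mul_div_cancel_left₀ (Zsum r m / r) hD.ne', ← sub_div, abs_div,
    abs_of_pos hD, div_le_iff₀ hD]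
  refine (abs_card_ball_satOne_sub_le hm hr).trans ?_
  calc (5 * m + 4 : ℝ) * ((3 * r) ^ (m - 1) * Zsum r (m - 1))
      = (5 * m + 4) * Zsum r (m - 1) * ((3 * r) ^ (m - 1) * r ^ 2) / r ^ 2 := by field_simp
    _ ≤ (5 * m + 4) * Zsum r (m - 1) * (3 ^ (m - 1) * (2 * r + 1) ^ (m + 1)) / r ^ 2 := by
        gcongr
    _ = _ := by ring

/-- `|ρ_r(SAT(ℤ^m,1)) − Z_r(m)/r| = O(Z_r(m−1)/r²)`. -/
theorem stmt9 (m : ℕ) (hm : 1 ≤ m) :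
    (fun r : ℕ => rhoOne m (SatOne m) r - Zsum r m / r) =O[atTop]
      (fun r : ℕ => Zsum r (m - 1) / (r : ℝ) ^ 2) := by
  refine Asymptotics.IsBigO.of_bound ((5 * m + 4) * 3 ^ (m - 1)) ?_
  filter_upwards [eventually_ge_atTop 1] with r hr
  rw [Real.norm_eq_abs, Real.norm_of_nonneg (div_nonneg (Zsum_nonneg r _) (sq_nonneg _))]
  exact abs_rhoOne_satOne_sub_le hm hr
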